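/- arXiv:1806.06160 — 4 statements merged into one kernel-verified Lean document; each statement's English description precedes it below -/
import Mathlib

section
/- Let J be a closed subset of a compact Hausdorff (normal) space K on which every zero-free continuous function has a continuous logarithm, let B be a uniform algebra on J, and define A = {f ∈ C(K) : f|J ∈ B}. If R(B) = C(J) then R(A) = C(K). (Here R(A) denotes the uniform closure of quotients p/q with p,q ∈ A and q zero-free.) -/
/-- `R(A)`: the uniform closure in `C(K, ℂ)` of the set of quotients `p/q` with
`p, q ∈ A` and `q` zero-free on `K`. -/
def Rcl {K : Type*} [TopologicalSpace K] (A : Set C(K, ℂ)) : Set C(K, ℂ) :=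
  closure {f : C(K, ℂ) | ∃ p ∈ A, ∃ q ∈ A, (∀ x, q x ≠ 0) ∧ ∀ x, f x * q x = p x}

/-- Norm-controlled Tietze extension for complex-valued functions, obtained by
extending real and imaginary parts separately (losing a factor of `2`). -/
lemma extend_small {K : Type*} [TopologicalSpace K] [NormalSpace K]
    (J : Set K) (hJ : IsClosed J) (d : C(J, ℂ)) (c : ℝ) (hc0 : 0 ≤ c) (hc : ∀ x, ‖d x‖ ≤ c) :
    ∃ e : C(K, ℂ), (∀ x : J, e x = d x) ∧ ∀ x, ‖e x‖ ≤ 2 * c := by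
  have habs : ∀ (x : J), |(d x).re| ≤ c ∧ |(d x).im| ≤ c := by
    intro x
    exact ⟨le_trans (Complex.abs_re_le_norm _) (hc x),
      le_trans (Complex.abs_im_le_norm _) (hc x)⟩
  let d₁ : BoundedContinuousFunction J ℝ :=
    ⟨⟨fun x => (d x).re, (Complex.continuous_re.comp d.continuous)⟩, by
      refine ⟨2 * c, fun x y => ?_⟩
      have h1 := (habs x).1; have h2 := (habs y).1
      have h3 := dist_le_norm_add_norm ((d x).re) ((d y).re)
      simp only [Real.norm_eq_abs] at h3
      linarith⟩
  let d₂ : BoundedContinuousFunction J ℝ :=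
    ⟨⟨fun x => (d x).im, (Complex.continuous_im.comp d.continuous)⟩, by
      refine ⟨2 * c, fun x y => ?_⟩
      have h1 := (habs x).2; have h2 := (habs y).2
      have h3 := dist_le_norm_add_norm ((d x).im) ((d y).im)
      simp only [Real.norm_eq_abs] at h3
      linarith⟩
  obtain ⟨E₁, hE₁n, hE₁⟩ := BoundedContinuousFunction.exists_norm_eq_restrict_eq_of_closed d₁ hJ
  obtain ⟨E₂, hE₂n, hE₂⟩ := BoundedContinuousFunction.exists_norm_eq_restrict_eq_of_closed d₂ hJ
  have hd₁ : ‖d₁‖ ≤ c := BoundedContinuousFunction.norm_le hc0 |>.2 fun x => by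
    simpa [d₁, Real.norm_eq_abs] using (habs x).1
  have hd₂ : ‖d₂‖ ≤ c := BoundedContinuousFunction.norm_le hc0 |>.2 fun x => by
    simpa [d₂, Real.norm_eq_abs] using (habs x).2
  refine ⟨⟨fun x => (E₁ x : ℂ) + (E₂ x : ℂ) * Complex.I, ?_⟩, ?_, ?_⟩
  · exact (Complex.continuous_ofReal.comp E₁.continuous).add
      ((Complex.continuous_ofReal.comp E₂.continuous).mul continuous_const)
  · intro x
    have h1 : E₁ x = d₁ x := by
      have := congrArg (fun h => h x) (congrArg DFunLike.coe hE₁)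
      simpa using this
    have h2 : E₂ x = d₂ x := by
      have := congrArg (fun h => h x) (congrArg DFunLike.coe hE₂)
      simpa using this
    simp only [ContinuousMap.coe_mk, h1, h2]
    show ((d x).re : ℂ) + ((d x).im : ℂ) * Complex.I = d x
    exact Complex.re_add_im _
  · intro x
    have b1 : ‖E₁ x‖ ≤ c := le_trans (E₁.norm_coe_le_norm x) (hE₁n ▸ hd₁)
    have b2 : ‖E₂ x‖ ≤ c := le_trans (E₂.norm_coe_le_norm x) (hE₂n ▸ hd₂)
    calc ‖(E₁ x : ℂ) + (E₂ x : ℂ) * Complex.I‖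
        ≤ ‖(E₁ x : ℂ)‖ + ‖(E₂ x : ℂ) * Complex.I‖ := norm_add_le _ _
      _ = ‖E₁ x‖ + ‖E₂ x‖ := by
          simp [Complex.norm_real, norm_mul, Complex.norm_I]
      _ ≤ 2 * c := by linarith

/-- Let `J` be a closed subset of a compact Hausdorff space `K` on which every
zero-free continuous function has a continuous logarithm, let `B` be a uniform
algebra on `J`, and let `A = {f ∈ C(K) : f|J ∈ B}`.  If `R(B) = C(J)`, then
`R(A) = C(K)`. -/
theorem stmt8 (K : Type*) [TopologicalSpace K] [CompactSpace K] [T2Space K]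
    (J : Set K) (hJ : IsClosed J)
    (hlog : ∀ g : C(J, ℂ), (∀ x, g x ≠ 0) → ∃ α : C(J, ℂ), ∀ x, g x = Complex.exp (α x))
    (B : Subalgebra ℂ C(J, ℂ)) (hBclosed : IsClosed (B : Set C(J, ℂ)))
    (hBsep : ∀ x y : J, x ≠ y → ∃ f ∈ B, f x ≠ f y)
    (A : Set C(K, ℂ)) (hA : A = {f : C(K, ℂ) | f.restrict J ∈ B})
    (hRB : Rcl (B : Set C(J, ℂ)) = Set.univ) :
    Rcl A = Set.univ := by
  haveI : CompactSpace J := isCompact_iff_compactSpace.mp hJ.isCompact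
  rw [Set.eq_univ_iff_forall]
  intro f
  rw [Rcl, Metric.mem_closure_iff]
  intro ε hε
  -- Approximate `f|J` by a quotient over `B`.
  have hfJ : f.restrict J ∈ Rcl (B : Set C(J, ℂ)) := by rw [hRB]; trivial
  rw [Rcl, Metric.mem_closure_iff] at hfJ
  obtain ⟨g, hg, hdist⟩ := hfJ (ε / 3) (by linarith)
  obtain ⟨p, hp, q, hq, hq0, hpq⟩ := hg
  -- Extend a logarithm of `q` to `K` and exponentiate.
  obtain ⟨α, hα⟩ := hlog q hq0
  obtain ⟨β, hβ⟩ := ContinuousMap.exists_restrict_eq hJ α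
  have hβα : ∀ x : J, β x = α x := fun x => by
    have := congrArg (fun h => h x) (congrArg DFunLike.coe hβ)
    simpa using this
  set Q : C(K, ℂ) := ⟨fun x => Complex.exp (β x), Complex.continuous_exp.comp β.continuous⟩
    with hQdef
  have hQ0 : ∀ x, Q x ≠ 0 := fun x => Complex.exp_ne_zero _
  have hQJ : Q.restrict J = q := by
    ext x
    simp only [ContinuousMap.restrict_apply, hQdef, ContinuousMap.coe_mk]
    rw [hβα x, ← hα x]
  have hQA : Q ∈ A := by rw [hA]; show Q.restrict J ∈ B; rw [hQJ]; exact hq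
  -- Norm-controlled extension of the error on `J`.
  set d : C(J, ℂ) := f.restrict J - g with hd
  have hdc : ∀ x, ‖d x‖ ≤ ε / 3 := fun x => by
    have h := ContinuousMap.dist_apply_le_dist (f := f.restrict J) (g := g) x
    have : dist ((f.restrict J) x) (g x) < ε / 3 := lt_of_le_of_lt h hdist
    simpa [hd, dist_eq_norm] using this.le
  obtain ⟨e, heJ, hebound⟩ := extend_small J hJ d (ε / 3) (by linarith) hdc
  refine ⟨f - e, ⟨(f - e) * Q, ?_, Q, hQA, hQ0, fun x => rfl⟩, ?_⟩
  · -- `((f - e) * Q)|J = g * q = p ∈ B`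
    rw [hA]
    show ((f - e) * Q).restrict J ∈ B
    have hrestr : ((f - e) * Q).restrict J = p := by
      ext x
      simp only [ContinuousMap.restrict_apply, ContinuousMap.mul_apply,
        ContinuousMap.sub_apply]
      have heq : f x - e x = g x := by
        rw [heJ x]
        simp [hd]
      have hQx : Q x = q x := by
        have := congrArg (fun h => h x) (congrArg DFunLike.coe hQJ)
        simpa using this
      rw [heq, hQx]
      exact hpq x
    rw [hrestr]
    exact hp
  · -- `dist f (f - e) = ‖e‖ ≤ 2ε/3 < ε`
    have h1 : dist f (f - e) = ‖e‖ := by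
      rw [dist_eq_norm]
      congr 1
      abel
    rw [h1]
    have : ‖e‖ ≤ 2 * (ε / 3) :=
      (ContinuousMap.norm_le _ (by linarith)).2 hebound
    linarith
end

section
/- More generally: with J, K, B, A as above (J closed in normal compact K, every zero-free continuous function on J has a logarithm, B a uniform algebra on J, A = {f ∈ C(K) : f|J ∈ B}), one has R(A) = {f ∈ C(K) : f|J ∈ R(B)}. -/
/-- Let `J` be a closed subset of a compact Hausdorff space `K` on which every
zero-free continuous function has a continuous logarithm, let `B` be a uniform
algebra on `J`, and let `A = {f ∈ C(K) : f|J ∈ B}`.  Then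
`R(A) = {f ∈ C(K) : f|J ∈ R(B)}`. -/
theorem stmt9 (K : Type*) [TopologicalSpace K] [CompactSpace K] [T2Space K]
    (J : Set K) (hJ : IsClosed J)
    (hlog : ∀ g : C(J, ℂ), (∀ x, g x ≠ 0) → ∃ α : C(J, ℂ), ∀ x, g x = Complex.exp (α x))
    (B : Subalgebra ℂ C(J, ℂ)) (hBclosed : IsClosed (B : Set C(J, ℂ)))
    (hBsep : ∀ x y : J, x ≠ y → ∃ f ∈ B, f x ≠ f y)
    (A : Set C(K, ℂ)) (hA : A = {f : C(K, ℂ) | f.restrict J ∈ B}) :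
    Rcl A = {f : C(K, ℂ) | f.restrict J ∈ Rcl (B : Set C(J, ℂ))} := by
  subst hA
  haveI : CompactSpace J := isCompact_iff_compactSpace.mp hJ.isCompact
  set QB : Set C(J, ℂ) :=
    {f : C(J, ℂ) | ∃ p ∈ (B : Set C(J, ℂ)), ∃ q ∈ (B : Set C(J, ℂ)),
      (∀ x, q x ≠ 0) ∧ ∀ x, f x * q x = p x} with hQB
  set QA : Set C(K, ℂ) :=
    {f : C(K, ℂ) | ∃ p ∈ {f : C(K, ℂ) | f.restrict J ∈ B},
      ∃ q ∈ {f : C(K, ℂ) | f.restrict J ∈ B},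
      (∀ x, q x ≠ 0) ∧ ∀ x, f x * q x = p x} with hQA
  -- Key: if `F|J` is exactly a quotient of elements of `B`, then `F` itself is a
  -- quotient of elements of `A`.
  have key : ∀ F : C(K, ℂ), F.restrict J ∈ QB → F ∈ QA := by
    intro F hF
    obtain ⟨p, hp, q, hq, hq0, heq⟩ := hF
    obtain ⟨α, hα⟩ := hlog q hq0
    obtain ⟨β, hβ⟩ := α.exists_restrict_eq hJ
    set Q : C(K, ℂ) := ⟨fun x => Complex.exp (β x), Complex.continuous_exp.comp β.continuous⟩
      with hQdef
    have hβJ : ∀ x : J, β (x : K) = α x := fun x => congrArg (fun g : C(J, ℂ) => g x) hβ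
    have hQJ : Q.restrict J = q := by
      ext x
      simp only [ContinuousMap.restrict_apply, hQdef, ContinuousMap.coe_mk]
      rw [hβJ x, ← hα x]
    have hPJ : (F * Q).restrict J = p := by
      ext x
      have := heq x
      simp only [ContinuousMap.restrict_apply] at this ⊢
      simp only [ContinuousMap.mul_apply, hQdef, ContinuousMap.coe_mk]
      rw [hβJ x, ← hα x]
      exact this
    refine ⟨F * Q, ?_, Q, ?_, fun x => Complex.exp_ne_zero _, fun x => rfl⟩
    · show (F * Q).restrict J ∈ B
      rw [hPJ]; exact hp
    · show Q.restrict J ∈ B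
      rw [hQJ]; exact hq
  ext f
  simp only [Set.mem_setOf_eq, Rcl]
  constructor
  · -- restriction is continuous, and maps `QA` into `QB`
    intro hf
    refine map_mem_closure (ContinuousMap.continuous_restrict J) hf ?_
    rintro g ⟨p, hp, q, hq, hq0, heq⟩
    exact ⟨p.restrict J, hp, q.restrict J, hq, fun x => hq0 x, fun x => heq x⟩
  · intro hf
    rw [Metric.mem_closure_iff] at hf ⊢
    intro ε hε
    obtain ⟨g0, hg0, hdist⟩ := hf (ε / 2) (by positivity)
    set d : C(J, ℂ) := g0 - f.restrict J with hd
    have hdball : ∀ x : J, d x ∈ Metric.closedBall (0 : ℂ) (ε / 2) := by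
      intro x
      simp only [Metric.mem_closedBall, dist_zero_right, hd, ContinuousMap.sub_apply]
      calc ‖g0 x - f.restrict J x‖ = dist (f.restrict J x) (g0 x) := by
            rw [dist_eq_norm, norm_sub_rev]
        _ ≤ dist (f.restrict J) g0 := ContinuousMap.dist_apply_le_dist x
        _ ≤ ε / 2 := hdist.le
    have : TietzeExtension.{_, 0} (Metric.closedBall (0 : ℂ) (ε / 2)) :=
      Metric.instTietzeExtensionClosedBall ℂ (0 : ℂ) (by positivity)
    obtain ⟨h, hhmem, hhrest⟩ := d.exists_forall_mem_restrict_eq hJ hdball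
    have hhJ : ∀ x : J, h (x : K) = d x := fun x =>
      congrArg (fun g : C(J, ℂ) => g x) hhrest
    refine ⟨f + h, key (f + h) ?_, ?_⟩
    · have : (f + h).restrict J = g0 := by
        ext x
        simp only [ContinuousMap.restrict_apply, ContinuousMap.add_apply, hhJ x, hd,
          ContinuousMap.sub_apply, ContinuousMap.restrict_apply]
        ring
      rw [this]; exact hg0
    · have hle : dist f (f + h) ≤ ε / 2 := by
        rw [ContinuousMap.dist_le (by positivity)]
        intro x
        have := hhmem x
        simp only [Metric.mem_closedBall, dist_zero_right] at this
        simpa [dist_eq_norm] using this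
      linarith
end

section
/- If X ⊂ ℂ^N is compact and the uniform algebra P(X) (closure of polynomials in C(X)) has a dense set of invertible elements, then the polynomial hull of X equals the rational hull of X. -/
/-!
Evaluation at a point `z` of the polynomial hull is bounded by the sup norm on `X`, so by
Hahn–Banach it extends to a functional `φ` of norm at most one on `C(X)`, which by continuity is
multiplicative on `P(X)`. If a polynomial `p` vanished at `z` but not on `X`, then `δ ≤ |p|` on
`X` for some `δ > 0`; an invertible `g ∈ P(X)` with `‖p - g‖ ≤ δ/3` has `‖g⁻¹‖ ≤ 3/(2δ)`, while
`|φ g| = |φ (g - p)| ≤ δ/3`, so `1 = φ g · φ g⁻¹ ≤ 1/2`. Conversely, if `z` is in the rational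
hull then `p - p(z)` vanishes somewhere on `X`, so `|p(z)|` is a value of `|p|` on `X`.
-/

open MvPolynomial

/-- The polynomial hull of a set `X ⊆ ℂ^N`. -/
def polyHull (N : ℕ) (X : Set (Fin N → ℂ)) : Set (Fin N → ℂ) :=
  {z | ∀ p : MvPolynomial (Fin N) ℂ,
    ‖eval z p‖ ≤ sSup ((fun x => ‖eval x p‖) '' X)}

/-- The rational hull of a set `X ⊆ ℂ^N`:
`{z | every polynomial vanishing at z has a zero on X}`. -/
def ratHull (N : ℕ) (X : Set (Fin N → ℂ)) : Set (Fin N → ℂ) :=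
  {z | ∀ p : MvPolynomial (Fin N) ℂ, eval z p = 0 → ∃ x ∈ X, eval x p = 0}

/-- `P(X)`: the uniform closure in `C(X, ℂ)` of the polynomial functions. -/
def Pcl (N : ℕ) (X : Set (Fin N → ℂ)) : Set C(X, ℂ) :=
  closure (Set.range fun p : MvPolynomial (Fin N) ℂ =>
    (⟨fun x => eval (x : Fin N → ℂ) p,
      (MvPolynomial.continuous_eval (p := p)).comp continuous_subtype_val⟩ : C(X, ℂ)))

theorem exists_continuousLinearMap_comp_eq {𝕜 M E : Type*} [RCLike 𝕜] [AddCommGroup M]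
    [Module 𝕜 M] [NormedAddCommGroup E] [NormedSpace 𝕜 E] (T : M →ₗ[𝕜] E) (f : M →ₗ[𝕜] 𝕜)
    (hf : ∀ m, ‖f m‖ ≤ ‖T m‖) :
    ∃ g : E →L[𝕜] 𝕜, ‖g‖ ≤ 1 ∧ ∀ m, g (T m) = f m := by
  have hker : LinearMap.ker T ≤ LinearMap.ker f := fun m hm => by
    have hTm : ‖T m‖ = 0 := by simpa using hm
    simpa using (hf m).trans_eq hTm
  let f₀ : LinearMap.range T →ₗ[𝕜] 𝕜 :=
    (LinearMap.ker T).liftQ f hker ∘ₗ T.quotKerEquivRange.symm.toLinearMap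
  have hf₀ : ∀ m, f₀ ⟨T m, LinearMap.mem_range_self T m⟩ = f m := fun m => by
    simp [f₀, LinearMap.quotKerEquivRange_symm_apply_image]
  have hbound : ∀ y, ‖f₀ y‖ ≤ 1 * ‖y‖ := by
    rintro ⟨_, m, rfl⟩
    simpa [hf₀] using hf m
  obtain ⟨g, hg, hnorm⟩ := exists_extension_norm_eq (LinearMap.range T) (f₀.mkContinuous 1 hbound)
  exact ⟨g, hnorm ▸ LinearMap.mkContinuous_norm_le _ zero_le_one _,
    fun m => (hg ⟨T m, LinearMap.mem_range_self T m⟩).trans (hf₀ m)⟩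

theorem map_mul_of_mem_closure {R S : Type*} [TopologicalSpace R] [Mul R] [ContinuousMul R]
    [TopologicalSpace S] [T2Space S] [Mul S] [ContinuousMul S] {φ : R → S} (hφ : Continuous φ)
    {A : Set R} (hA : ∀ a ∈ A, ∀ b ∈ A, φ (a * b) = φ a * φ b) {a b : R}
    (ha : a ∈ closure A) (hb : b ∈ closure A) : φ (a * b) = φ a * φ b := by
  have : closure (A ×ˢ A) ⊆ {p : R × R | φ (p.1 * p.2) = φ p.1 * φ p.2} :=
    closure_minimal (fun p hp => hA _ hp.1 _ hp.2)
      (isClosed_eq (hφ.comp continuous_mul) ((hφ.comp continuous_fst).mul (hφ.comp continuous_snd)))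
  exact this (show (a, b) ∈ closure (A ×ˢ A) by rw [closure_prod_eq]; exact ⟨ha, hb⟩)

theorem ContinuousMap.exists_pos_le_norm {X E : Type*} [TopologicalSpace X] [CompactSpace X]
    [NormedAddCommGroup E] (f : C(X, E)) (hf : ∀ x, f x ≠ 0) : ∃ δ > 0, ∀ x, δ ≤ ‖f x‖ := by
  rcases isEmpty_or_nonempty X with hX | hX
  · exact ⟨1, one_pos, fun x => hX.elim x⟩
  obtain ⟨x₀, -, hmin⟩ := (isCompact_univ (X := X)).exists_isMinOn Set.univ_nonempty
    f.continuous.norm.continuousOn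
  exact ⟨‖f x₀‖, norm_pos_iff.mpr (hf x₀), fun x => hmin (Set.mem_univ x)⟩

theorem ContinuousMap.norm_le_inv_of_mul_eq_one {X 𝕜 : Type*} [TopologicalSpace X]
    [CompactSpace X] [NormedField 𝕜] {g h : C(X, 𝕜)} (hgh : g * h = 1) {c : ℝ} (hc : 0 < c)
    (hg : ∀ x, c ≤ ‖g x‖) : ‖h‖ ≤ c⁻¹ := by
  refine (ContinuousMap.norm_le _ (inv_nonneg.mpr hc.le)).mpr fun x => ?_
  have hx : ‖g x‖ * ‖h x‖ = 1 := by
    rw [← norm_mul, ← ContinuousMap.mul_apply, hgh, ContinuousMap.one_apply, norm_one]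
  rw [← mul_one c⁻¹, le_inv_mul_iff₀ hc]
  calc c * ‖h x‖ ≤ ‖g x‖ * ‖h x‖ := mul_le_mul_of_nonneg_right (hg x) (norm_nonneg _)
    _ = 1 := hx

namespace MvPolynomial

variable {σ R : Type*} [CommSemiring R] [TopologicalSpace R] [IsTopologicalSemiring R]

noncomputable def toContinuousMapOnAlgHom (X : Set (σ → R)) :
    MvPolynomial σ R →ₐ[R] C(X, R) where
  toFun p := ⟨fun x => eval (x : σ → R) p, (continuous_eval p).comp continuous_subtype_val⟩
  map_zero' := by ext; simp
  map_add' _ _ := by ext; simp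
  map_one' := by ext; simp
  map_mul' _ _ := by ext; simp
  commutes' _ := by ext; simp

end MvPolynomial

section Hulls

variable {N : ℕ} {X : Set (Fin N → ℂ)}

theorem ratHull_subset_polyHull (hX : IsCompact X) : ratHull N X ⊆ polyHull N X := by
  intro z hz p
  obtain ⟨x, hxX, hx⟩ := hz (p - C (eval z p)) (by simp)
  rw [map_sub, eval_C, sub_eq_zero] at hx
  exact le_csSup (hX.image (continuous_eval p).norm).bddAbove ⟨x, hxX, congrArg norm hx⟩

theorem norm_eval_le_of_mem_polyHull [CompactSpace X] {z : Fin N → ℂ} (hz : z ∈ polyHull N X)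
    (p : MvPolynomial (Fin N) ℂ) : ‖eval z p‖ ≤ ‖toContinuousMapOnAlgHom X p‖ :=
  (hz p).trans <| Real.sSup_le
    (by rintro _ ⟨x, hx, rfl⟩; exact (toContinuousMapOnAlgHom X p).norm_coe_le_norm ⟨x, hx⟩)
    (norm_nonneg _)

theorem exists_character_of_mem_polyHull [CompactSpace X] {z : Fin N → ℂ}
    (hz : z ∈ polyHull N X) :
    ∃ φ : C(X, ℂ) →L[ℂ] ℂ, ‖φ‖ ≤ 1 ∧ (∀ p, φ (toContinuousMapOnAlgHom X p) = eval z p) ∧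
      ∀ f ∈ Pcl N X, ∀ g ∈ Pcl N X, φ (f * g) = φ f * φ g := by
  obtain ⟨φ, hφ, hφp⟩ := exists_continuousLinearMap_comp_eq
    (toContinuousMapOnAlgHom X).toLinearMap (aeval z).toLinearMap (norm_eval_le_of_mem_polyHull hz)
  simp only [AlgHom.toLinearMap_apply] at hφp
  refine ⟨φ, hφ, hφp, fun f hf g hg =>
    map_mul_of_mem_closure (A := Set.range (toContinuousMapOnAlgHom X)) φ.continuous ?_ hf hg⟩
  rintro _ ⟨p, rfl⟩ _ ⟨q, rfl⟩
  rw [← map_mul, hφp, hφp, hφp, map_mul]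

theorem polyHull_subset_ratHull (hX : IsCompact X)
    (hdense : ∀ f ∈ Pcl N X, ∀ ε > (0 : ℝ), ∃ g ∈ Pcl N X,
      (∃ h ∈ Pcl N X, g * h = 1) ∧ ∀ x : X, ‖f x - g x‖ < ε) :
    polyHull N X ⊆ ratHull N X := by
  have : CompactSpace X := isCompact_iff_compactSpace.mp hX
  intro z hz p hpz
  by_contra! hp
  obtain ⟨φ, hφ, hφp, hφmul⟩ := exists_character_of_mem_polyHull hz
  set f := toContinuousMapOnAlgHom X p
  obtain ⟨δ, hδ, hfδ⟩ := f.exists_pos_le_norm fun x => hp x x.2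
  obtain ⟨g, hg, ⟨h, hh, hgh⟩, hfg⟩ := hdense f (subset_closure ⟨p, rfl⟩) (δ / 3) (by positivity)
  have hg_lower : ∀ x, 2 * δ / 3 ≤ ‖g x‖ := fun x => by
    have := norm_sub_norm_le (f x) (f x - g x)
    rw [sub_sub_cancel] at this
    linarith [hfδ x, hfg x]
  have hφg : ‖φ g‖ ≤ δ / 3 := calc
    ‖φ g‖ = ‖φ (g - f)‖ := by rw [map_sub, hφp, hpz, sub_zero]
    _ ≤ ‖g - f‖ := by simpa using φ.le_of_opNorm_le hφ (g - f)
    _ ≤ δ / 3 := (ContinuousMap.norm_le _ (by positivity)).mpr fun x => by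
      simpa [norm_sub_rev] using (hfg x).le
  have hφh : ‖φ h‖ ≤ (2 * δ / 3)⁻¹ := by
    simpa using φ.le_of_opNorm_le_of_le hφ
      (ContinuousMap.norm_le_inv_of_mul_eq_one hgh (by positivity) hg_lower)
  have hφgh : φ g * φ h = 1 := by
    rw [← hφmul g hg h hh, hgh, ← map_one (toContinuousMapOnAlgHom X), hφp, map_one]
  have : (1 : ℝ) ≤ δ / 3 * (2 * δ / 3)⁻¹ := by
    rw [← norm_one (α := ℂ), ← hφgh, norm_mul]
    exact mul_le_mul hφg hφh (norm_nonneg _) (by positivity)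
  rw [show δ / 3 * (2 * δ / 3)⁻¹ = 1 / 2 by field_simp] at this
  norm_num at this

end Hulls

/-- If `X ⊆ ℂ^N` is compact and `P(X)` has a dense set of invertible elements
(every element of `P(X)` is uniformly approximable by invertible elements of `P(X)`),
then the polynomial hull of `X` equals the rational hull of `X`. -/
theorem stmt11 (N : ℕ) (X : Set (Fin N → ℂ)) (hX : IsCompact X)
    (hdense : ∀ f ∈ Pcl N X, ∀ ε > (0 : ℝ), ∃ g ∈ Pcl N X,
      (∃ h ∈ Pcl N X, g * h = 1) ∧ ∀ x : X, ‖f x - g x‖ < ε) :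
    polyHull N X = ratHull N X :=
  (polyHull_subset_ratHull hX hdense).antisymm (ratHull_subset_polyHull hX)
end

section
/- If X ⊂ Y are compact sets in ℂ^N such that X satisfies the generalized argument principle and Y is simply coconnected (every zero-free continuous function on Y has a continuous logarithm), then for every z in the polynomial hull of X, every polynomial vanishing at z has a zero on Y; that is, the polynomial hull of X is contained in the rational hull of Y. -/
open MvPolynomial

/-- `X` satisfies the generalized argument principle: every polynomial having a
continuous logarithm on `X` has no zeros on the polynomial hull of `X`. -/
def GenArgPrinciple (N : ℕ) (X : Set (Fin N → ℂ)) : Prop :=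
  ∀ p : MvPolynomial (Fin N) ℂ,
    (∃ g : (Fin N → ℂ) → ℂ, ContinuousOn g X ∧ ∀ x ∈ X, eval x p = Complex.exp (g x)) →
    ∀ z ∈ polyHull N X, eval z p ≠ 0

/-- `Y` is simply coconnected: every zero-free continuous function on `Y` has a
continuous logarithm. -/
def SimplyCoconnected (N : ℕ) (Y : Set (Fin N → ℂ)) : Prop :=
  ∀ f : (Fin N → ℂ) → ℂ, ContinuousOn f Y → (∀ y ∈ Y, f y ≠ 0) →
    ∃ g : (Fin N → ℂ) → ℂ, ContinuousOn g Y ∧ ∀ y ∈ Y, f y = Complex.exp (g y)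

/-- If `X ⊆ Y` are compact sets in `ℂ^N` with `X` satisfying the generalized argument
principle and `Y` simply coconnected, then the polynomial hull of `X` is contained in
the rational hull of `Y`: every polynomial vanishing at a point of the polynomial hull
of `X` has a zero on `Y`. -/
theorem stmt15 (N : ℕ) (X Y : Set (Fin N → ℂ)) (hX : IsCompact X) (hY : IsCompact Y)
    (hXY : X ⊆ Y) (hgap : GenArgPrinciple N X) (hscc : SimplyCoconnected N Y) :
    ∀ z ∈ polyHull N X, ∀ p : MvPolynomial (Fin N) ℂ,
      eval z p = 0 → ∃ y ∈ Y, eval y p = 0 := by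
  intro z hz p hp
  by_contra h
  push_neg at h
  obtain ⟨g, hg, hge⟩ := hscc (fun x => eval x p)
    ((MvPolynomial.continuous_eval p).continuousOn) h
  exact hgap p ⟨g, hg.mono hXY, fun x hx => hge x (hXY hx)⟩ z hz hp
end
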